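/- For every positive integer n divisible by 8 there exists a matching independent probability distribution μ on the simple graphs with vertex set {1,...,n} such that every unordered pair e of distinct vertices satisfies Pr[X_e] = 1/2 (indeed, every nonempty matching M satisfies Pr[all edges of M present] = 2^{−|M|}), and every graph in the support of μ is disconnected. -/

import Mathlib

open scoped Classical

noncomputable def pr {n : ℕ} (μ : SimpleGraph (Fin n) → ℝ) (P : SimpleGraph (Fin n) → Prop) : ℝ :=
  ∑ G : SimpleGraph (Fin n), if P G then μ G else 0

def IsDist {n : ℕ} (μ : SimpleGraph (Fin n) → ℝ) : Prop :=
  (∀ G, 0 ≤ μ G) ∧ ∑ G : SimpleGraph (Fin n), μ G = 1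

def IsMatchingSet {n : ℕ} (M : Finset (Sym2 (Fin n))) : Prop :=
  (∀ e ∈ M, ¬ e.IsDiag) ∧
    ∀ e ∈ M, ∀ f ∈ M, e ≠ f → ∀ v : Fin n, v ∈ e → v ∉ f

def MatchingIndep {n : ℕ} (μ : SimpleGraph (Fin n) → ℝ) : Prop :=
  ∀ M : Finset (Sym2 (Fin n)), IsMatchingSet M →
    ∀ S ⊆ M, pr μ (fun G => ∀ e ∈ S, e ∈ G.edgeSet)
      = ∏ e ∈ S, pr μ (fun G => e ∈ G.edgeSet)

/-!
Let `twoCliques A` be the disjoint union of the cliques on `A` and on its complement. Give it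
weight `(1 - Re i^|A|) / 2^n`, and put mass `2^(-n/2)` on the empty graph. The weight is
nonnegative and vanishes when `4 ∣ |A|`, in particular for `A = ∅` and `A = univ`, the only
`A` for which `twoCliques A` is connected. A matching `S` with `k` edges lies in `twoCliques A`
iff no edge of `S` is cut by `A`, and summing `z^|A|` over such `A` gives
`(1 + z²)^k (1 + z)^(n - 2k)`. At `z = 1` this counts `2^(n - k)` sets, and at `z = i` it
vanishes for `k ≥ 1`, so `S` is present with probability `2^(-k)`. For `k = 0` the character sum
is `(1 + i)^n = 2^(n/2)`, which is exactly the mass that the empty graph makes up.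
-/

open Complex Finset

namespace MatchingIndepHalf

section Uncut

variable {α : Type*}

def Uncut (S : Finset (Sym2 α)) (A : Finset α) : Prop :=
  ∀ e ∈ S, ∀ x ∈ e, ∀ y ∈ e, (x ∈ A ↔ y ∈ A)

variable [DecidableEq α] {S : Finset (Sym2 α)} {A : Finset α}

lemma uncut_insert_mk {u v : α} :
    Uncut (insert s(u, v) S) A ↔ ((u ∈ A ↔ v ∈ A) ∧ Uncut S A) := by
  simp only [Uncut, forall_mem_insert, Sym2.mem_iff, forall_eq_or_imp, forall_eq]
  tauto

lemma uncut_insert_of_forall_notMem {x : α} (hx : ∀ e ∈ S, x ∉ e) :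
    Uncut S (insert x A) ↔ Uncut S A := by
  refine forall₂_congr fun e he => forall₂_congr fun a ha => forall₂_congr fun b hb => ?_
  rw [mem_insert, mem_insert, eq_false (ne_of_mem_of_not_mem ha (hx e he)),
    eq_false (ne_of_mem_of_not_mem hb (hx e he)), false_or, false_or]

end Uncut

section TwoCliques

variable {V : Type*}

def twoCliques (A : Finset V) : SimpleGraph V where
  Adj x y := x ≠ y ∧ (x ∈ A ↔ y ∈ A)
  symm := ⟨fun _ _ h => ⟨h.1.symm, h.2.symm⟩⟩
  loopless := ⟨fun _ h => h.1 rfl⟩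

lemma twoCliques_adj {A : Finset V} {x y : V} :
    (twoCliques A).Adj x y ↔ x ≠ y ∧ (x ∈ A ↔ y ∈ A) :=
  Iff.rfl

lemma forall_mem_edgeSet_twoCliques_iff {S : Finset (Sym2 V)} (hS : ∀ e ∈ S, ¬ e.IsDiag)
    (A : Finset V) : (∀ e ∈ S, e ∈ (twoCliques A).edgeSet) ↔ Uncut S A := by
  refine forall₂_congr fun e he => ?_
  induction e using Sym2.ind with
  | _ x y =>
    have hxy : x ≠ y := by simpa using hS _ he
    simp only [SimpleGraph.mem_edgeSet, twoCliques_adj, hxy, ne_eq, not_false_eq_true, true_and,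
      Sym2.mem_iff, forall_eq_or_imp, forall_eq]
    tauto

lemma eq_empty_or_eq_univ_of_preconnected_twoCliques [Fintype V] {A : Finset V}
    (h : (twoCliques A).Preconnected) : A = ∅ ∨ A = univ := by
  have hside : ∀ x y, x ∈ A → y ∈ A := fun x y hx => by
    obtain ⟨w⟩ := h x y
    induction w with
    | nil => exact hx
    | cons hadj _ ih => exact ih ((twoCliques_adj.1 hadj).2.1 hx)
  by_cases hA : A = ∅
  · exact .inl hA
  · obtain ⟨x, hx⟩ := nonempty_iff_ne_empty.2 hA
    exact .inr (eq_univ_iff_forall.2 fun y => hside x y hx)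

end TwoCliques

variable {n : ℕ}

lemma IsMatchingSet.mono {M S : Finset (Sym2 (Fin n))} (hM : IsMatchingSet M) (h : S ⊆ M) :
    IsMatchingSet S :=
  ⟨fun e he => hM.1 e (h he), fun e he f hf => hM.2 e (h he) f (h hf)⟩

lemma isMatchingSet_empty : IsMatchingSet (∅ : Finset (Sym2 (Fin n))) := by
  simp [IsMatchingSet]

lemma isMatchingSet_singleton {e : Sym2 (Fin n)} : IsMatchingSet {e} ↔ ¬ e.IsDiag := by
  simp +contextual [IsMatchingSet]

lemma IsMatchingSet.of_insert_mk {S : Finset (Sym2 (Fin n))} {u v : Fin n}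
    (hM : IsMatchingSet (insert s(u, v) S)) (he : s(u, v) ∉ S) :
    u ≠ v ∧ (∀ e ∈ S, u ∉ e) ∧ (∀ e ∈ S, v ∉ e) := by
  have hne : ∀ e ∈ S, s(u, v) ≠ e := fun e h h' => he (h' ▸ h)
  refine ⟨by simpa using hM.1 _ (mem_insert_self _ _), fun e h => ?_, fun e h => ?_⟩ <;>
    exact hM.2 _ (mem_insert_self _ _) e (mem_insert_of_mem h) (hne e h) _ (by simp)

section UncutSum

variable {R : Type*} [CommRing R] (z : R)

lemma sum_four_uncut_insert_mk {S : Finset (Sym2 (Fin n))} {u v : Fin n} (huv : u ≠ v)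
    (hu : ∀ e ∈ S, u ∉ e) (hv : ∀ e ∈ S, v ∉ e) {A : Finset (Fin n)} (huA : u ∉ A)
    (hvA : v ∉ A) :
    let f := fun B : Finset (Fin n) => if Uncut (insert s(u, v) S) B then z ^ B.card else 0
    f A + f (insert v A) + (f (insert u A) + f (insert u (insert v A)))
      = (1 + z ^ 2) * if Uncut S A then z ^ A.card else 0 := by
  have huvA : u ∉ insert v A := by simp [huv, huA]
  simp only [uncut_insert_mk, uncut_insert_of_forall_notMem hu, uncut_insert_of_forall_notMem hv,
    mem_insert_self, mem_insert, huA, hvA, huv, huv.symm, card_insert_of_notMem huvA,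
    card_insert_of_notMem hvA, true_iff, iff_true, iff_self, true_and, false_and, or_self,
    or_true, if_false]
  split_ifs <;> ring

-- Multiplied through by `(1 + z) ^ (2 * S.card)`, so that no truncated `W.card - 2 * S.card`
-- appears.
theorem sum_pow_card_uncut {S : Finset (Sym2 (Fin n))} (hS : IsMatchingSet S)
    {W : Finset (Fin n)} (hW : ∀ e ∈ S, ∀ x ∈ e, x ∈ W) :
    (1 + z) ^ (2 * S.card) * ∑ A ∈ W.powerset, (if Uncut S A then z ^ A.card else 0)
      = (1 + z ^ 2) ^ S.card * (1 + z) ^ W.card := by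
  induction S using Finset.induction_on generalizing W with
  | empty => simpa [Uncut, add_comm] using sum_pow_mul_eq_add_pow z 1 W
  | @insert e S he ih =>
    induction e using Sym2.ind with | _ u v => ?_
    obtain ⟨huv, hu, hv⟩ := IsMatchingSet.of_insert_mk hS he
    have huW : u ∈ W := hW _ (mem_insert_self _ _) u (Sym2.mem_mk_left u v)
    have hvW : v ∈ W := hW _ (mem_insert_self _ _) v (Sym2.mem_mk_right u v)
    obtain ⟨W', huW', hvW', rfl⟩ :
        ∃ W', u ∉ insert v W' ∧ v ∉ W' ∧ W = insert u (insert v W') :=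
      ⟨(W.erase u).erase v, by simp [huv], by simp, by
        rw [insert_erase (mem_erase.2 ⟨huv.symm, hvW⟩), insert_erase huW]⟩
    have hSW' : ∀ e ∈ S, ∀ x ∈ e, x ∈ W' := fun e he' x hx => by
      have := hW e (mem_insert_of_mem he') x hx
      simp only [mem_insert] at this
      rcases this with rfl | rfl | h
      exacts [absurd hx (hu e he'), absurd hx (hv e he'), h]
    have hsum : ∑ A ∈ (insert u (insert v W')).powerset,
          (if Uncut (insert s(u, v) S) A then z ^ A.card else 0)
        = (1 + z ^ 2) * ∑ A ∈ W'.powerset, (if Uncut S A then z ^ A.card else 0) := by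
      rw [sum_powerset_insert huW', sum_powerset_insert hvW', sum_powerset_insert hvW']
      simp only [← sum_add_distrib, mul_sum]
      refine sum_congr rfl fun A hA => ?_
      have hAW' := mem_powerset.1 hA
      exact sum_four_uncut_insert_mk z huv hu hv (fun h => huW' (mem_insert_of_mem (hAW' h)))
        (fun h => hvW' (hAW' h))
    rw [hsum, card_insert_of_notMem he, card_insert_of_notMem huW', card_insert_of_notMem hvW']
    have ih' := ih (IsMatchingSet.mono hS (subset_insert _ _)) hSW'
    linear_combination (1 + z ^ 2) * (1 + z) ^ 2 * ih'

end UncutSum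

noncomputable def cutWeight (a : ℕ) : ℝ := 1 - (I ^ a).re

lemma cutWeight_nonneg (a : ℕ) : 0 ≤ cutWeight a :=
  sub_nonneg.2 <| (re_le_norm _).trans (by simp)

lemma cutWeight_eq_zero_of_four_dvd {a : ℕ} (h : 4 ∣ a) : cutWeight a = 0 := by
  obtain ⟨m, rfl⟩ := h
  simp [cutWeight, pow_mul, I_pow_four]

lemma one_add_I_pow_of_eight_dvd (h : 8 ∣ n) : (1 + I) ^ n = ((2 ^ (n / 2) : ℝ) : ℂ) := by
  obtain ⟨m, rfl⟩ := h
  have h8 : (1 + I) ^ 8 = 16 := by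
    have h2 : (1 + I) ^ 2 = 2 * I := by ring_nf; rw [I_sq]; ring
    rw [show 8 = 2 * 4 by rfl, pow_mul, h2, mul_pow, I_pow_four]; norm_num
  rw [pow_mul, h8, show 8 * m / 2 = 4 * m by omega, pow_mul]
  push_cast; norm_num

lemma sum_uncut_cutWeight {S : Finset (Sym2 (Fin n))} (hS : IsMatchingSet S)
    (hne : S.Nonempty) :
    ∑ A : Finset (Fin n), (if Uncut S A then cutWeight A.card else 0) = 2 ^ n / 2 ^ S.card := by
  have hcount := sum_pow_card_uncut (1 : ℝ) hS (W := univ) (by simp)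
  have hchar := sum_pow_card_uncut I hS (W := univ) (by simp)
  rw [powerset_univ, card_univ, Fintype.card_fin] at hcount hchar
  rw [I_sq, add_neg_cancel, zero_pow hne.card_pos.ne', zero_mul] at hchar
  have hchar' : ∑ A : Finset (Fin n), (if Uncut S A then I ^ A.card else 0) = 0 :=
    (mul_eq_zero.1 hchar).resolve_left (pow_ne_zero _ fun h => by simpa using congrArg re h)
  have hsplit : ∀ A : Finset (Fin n), (if Uncut S A then cutWeight A.card else 0)
      = (if Uncut S A then (1 : ℝ) ^ A.card else 0) - (if Uncut S A then I ^ A.card else 0).re :=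
    fun A => by split_ifs <;> simp [cutWeight]
  rw [sum_congr rfl fun A _ => hsplit A, sum_sub_distrib, ← re_sum, hchar', zero_re, sub_zero,
    eq_div_iff (by positivity)]
  rw [one_add_one_eq_two, one_pow, one_add_one_eq_two, two_mul, pow_add] at hcount
  refine mul_left_cancel₀ (pow_ne_zero S.card (by norm_num : (2 : ℝ) ≠ 0)) ?_
  linear_combination hcount

lemma sum_cutWeight (h : 8 ∣ n) :
    ∑ A : Finset (Fin n), cutWeight A.card = 2 ^ n - 2 ^ (n / 2) := by
  have hchar := sum_pow_mul_eq_add_pow I 1 (univ : Finset (Fin n))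
  simp only [one_pow, mul_one, powerset_univ, card_univ, Fintype.card_fin, add_comm I,
    one_add_I_pow_of_eight_dvd h] at hchar
  simp only [cutWeight, sum_sub_distrib, sum_const, card_univ, Fintype.card_finset,
    Fintype.card_fin, ← re_sum, hchar, ofReal_re]
  simp

noncomputable def cliquePairDist (n : ℕ) : SimpleGraph (Fin n) → ℝ := fun G =>
  (∑ A : Finset (Fin n), if twoCliques A = G then cutWeight A.card else 0) / 2 ^ n
    + if G = ⊥ then (1 / 2) ^ (n / 2) else 0

lemma cliquePairDist_nonneg (G : SimpleGraph (Fin n)) : 0 ≤ cliquePairDist n G := by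
  refine add_nonneg (div_nonneg (sum_nonneg fun A _ => ?_) (by positivity)) ?_ <;>
    split_ifs <;> first | positivity | exact cutWeight_nonneg _

lemma pr_cliquePairDist (P : SimpleGraph (Fin n) → Prop) :
    pr (cliquePairDist n) P
      = (∑ A : Finset (Fin n), if P (twoCliques A) then cutWeight A.card else 0) / 2 ^ n
        + if P ⊥ then (1 / 2) ^ (n / 2) else 0 := by
  simp only [pr, cliquePairDist, ite_add_zero, sum_add_distrib, sum_div, ite_sum_zero, ite_div,
    zero_div]
  rw [sum_comm]
  simp_rw [← ite_and, and_comm (a := P _), ite_and]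
  simp

theorem pr_cliquePairDist_matching (h8 : 8 ∣ n) {S : Finset (Sym2 (Fin n))}
    (hS : IsMatchingSet S) :
    pr (cliquePairDist n) (fun G => ∀ e ∈ S, e ∈ G.edgeSet) = (1 / 2) ^ S.card := by
  rw [pr_cliquePairDist]
  simp only [forall_mem_edgeSet_twoCliques_iff hS.1]
  rcases S.eq_empty_or_nonempty with rfl | hne
  · have hn : (2 : ℝ) ^ n = 2 ^ (n / 2) * 2 ^ (n / 2) := by
      rw [← pow_add]; congr 1; omega
    simp only [Uncut, notMem_empty, IsEmpty.forall_iff, implies_true, if_true,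
      sum_cutWeight h8, card_empty, pow_zero, hn, one_div, inv_pow]
    field_simp
    ring
  · have hbot : ¬ ∀ e ∈ S, e ∈ (⊥ : SimpleGraph (Fin n)).edgeSet := fun h => by
      obtain ⟨e, he⟩ := hne
      simpa using h e he
    rw [if_neg hbot, add_zero, sum_uncut_cutWeight hS hne, one_div, inv_pow]
    field_simp

lemma pr_cliquePairDist_edge (h8 : 8 ∣ n) {e : Sym2 (Fin n)} (he : ¬ e.IsDiag) :
    pr (cliquePairDist n) (fun G => e ∈ G.edgeSet) = 1 / 2 := by
  simpa using pr_cliquePairDist_matching h8 (isMatchingSet_singleton.2 he)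

lemma sum_cliquePairDist (h8 : 8 ∣ n) : ∑ G, cliquePairDist n G = 1 := by
  simpa [pr] using pr_cliquePairDist_matching h8 isMatchingSet_empty

lemma cliquePairDist_eq_zero_of_connected (h8 : 8 ∣ n) {G : SimpleGraph (Fin n)}
    (hG : G.Connected) : cliquePairDist n G = 0 := by
  have hbot : G ≠ ⊥ := by
    rintro rfl
    obtain ⟨hsub, hne⟩ := SimpleGraph.connected_bot_iff.1 hG
    have := Fintype.card_le_one_iff_subsingleton.2 hsub
    have := Fintype.card_pos_iff.2 hne
    simp only [Fintype.card_fin] at *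
    omega
  have hweight : ∀ A : Finset (Fin n), twoCliques A = G → cutWeight A.card = 0 := by
    rintro A rfl
    apply cutWeight_eq_zero_of_four_dvd
    rcases eq_empty_or_eq_univ_of_preconnected_twoCliques hG.preconnected with rfl | rfl
    · simp
    · simpa using dvd_trans (by norm_num) h8
  simp +contextual [cliquePairDist, hbot, hweight]

end MatchingIndepHalf

open MatchingIndepHalf in
theorem matching_indep_half_disconnected (n : ℕ) (hdvd : 8 ∣ n) :
    ∃ μ : SimpleGraph (Fin n) → ℝ, IsDist μ ∧ MatchingIndep μ ∧
      (∀ u v : Fin n, u ≠ v → pr μ (fun G => G.Adj u v) = 1 / 2) ∧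
      (∀ M : Finset (Sym2 (Fin n)), IsMatchingSet M → M.Nonempty →
        pr μ (fun G => ∀ e ∈ M, e ∈ G.edgeSet) = (1 / 2 : ℝ) ^ M.card) ∧
      (∀ G, 0 < μ G → ¬ G.Connected) := by
  refine ⟨cliquePairDist n, ⟨cliquePairDist_nonneg, sum_cliquePairDist hdvd⟩, ?_, ?_,
    fun M hM _ => pr_cliquePairDist_matching hdvd hM, ?_⟩
  · intro M hM S hSM
    rw [pr_cliquePairDist_matching hdvd (hM.mono hSM),
      prod_congr rfl fun e he => pr_cliquePairDist_edge hdvd (hM.1 e (hSM he)), prod_const]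
  · intro u v huv
    exact pr_cliquePairDist_edge hdvd (e := s(u, v)) (by simpa using huv)
  · intro G hG hconn
    exact hG.ne' (cliquePairDist_eq_zero_of_connected hdvd hconn)
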